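/- The sequence space ℓ¹ does not have the RMF property. More precisely: for every n = 2^m there exists a function u : [0,1) → ℓ¹ with ‖u(x)‖_{ℓ¹} = 1 for all x (namely u(x) = e_k for x ∈ [(k−1)2^{−n}, k·2^{−n}), k = 1, …, 2ⁿ) such that M_R u(x) ≳ log m ≳ log log n for all x ∈ [0,1). Hence M_R is unbounded from L^p(ℝ; ℓ¹) to L^p(ℝ) for every p. -/

import Mathlib

open MeasureTheory
open scoped ENNReal

noncomputable section

instance : Fact ((1 : ENNReal) ≤ 1) := ⟨le_rfl⟩

/-- The sequence space ℓ¹. -/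
abbrev EllOne : Type := lp (fun _ : ℕ => ℝ) 1

/-- Expectation `E‖∑_{i∈s} ε_i f i‖` over independent random signs indexed by `s`. -/
def radE {ι X : Type*} [DecidableEq ι] [NormedAddCommGroup X]
    (s : Finset ι) (f : ι → X) : ℝ :=
  ((2 : ℝ) ^ s.card)⁻¹ *
    ∑ σ : {i // i ∈ s} → Bool, ‖∑ i : {i // i ∈ s}, (if σ i then f i.1 else - f i.1)‖

/-- `A_{2^k} u (x)`: the average of `u` over the dyadic interval of length `2^k` containing `x`. -/
def dyadicAvg₁ {X : Type*} [NormedAddCommGroup X] [NormedSpace ℝ X]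
    (u : ℝ → X) (k : ℤ) (x : ℝ) : X :=
  ((volume (Set.Ico ((2 : ℝ) ^ k * ⌊x / (2 : ℝ) ^ k⌋) ((2 : ℝ) ^ k * (⌊x / (2 : ℝ) ^ k⌋ + 1)))).toReal)⁻¹
    • ∫ y in Set.Ico ((2 : ℝ) ^ k * ⌊x / (2 : ℝ) ^ k⌋) ((2 : ℝ) ^ k * (⌊x / (2 : ℝ) ^ k⌋ + 1)), u y

/-- The Rademacher maximal function on the line. -/
def rademacherMaximal₁ {X : Type*} [NormedAddCommGroup X] [NormedSpace ℝ X]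
    (u : ℝ → X) (x : ℝ) : ℝ :=
  ⨆ p : {p : Finset ℤ × (ℤ → ℝ) // ∑ k ∈ p.1, (p.2 k) ^ 2 ≤ 1},
    radE p.1.1 (fun k => p.1.2 k • dyadicAvg₁ u k x)

open Finset


namespace NotRMF

open scoped Classical

lemma norm_lp_single (k : ℕ) : ‖lp.single (E := fun _ : ℕ => ℝ) 1 k (1:ℝ)‖ = 1 := by
  have := lp.norm_single (E := fun _ : ℕ => ℝ) (p := (1:ENNReal))
    (by norm_num) k (1:ℝ)
  simpa using this

/-- the step function -/
def u (n : ℕ) : ℝ → EllOne := fun x =>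
  if 0 ≤ x ∧ x < 1 then lp.single 1 (⌊x * 2^n⌋.toNat) 1 else 0

variable {n : ℕ}

lemma two_pow_pos : (0:ℝ) < 2 ^ n := by positivity

lemma u_cell {k : ℕ} (hk : k < 2 ^ n) {x : ℝ}
    (hx : x ∈ Set.Ico ((k : ℝ) * ((2:ℝ)^n)⁻¹) (((k : ℝ) + 1) * ((2:ℝ)^n)⁻¹)) :
    u n x = lp.single 1 k 1 := by
  obtain ⟨h1, h2⟩ := hx
  have hp : (0:ℝ) < 2^n := two_pow_pos
  have hx0 : 0 ≤ x := le_trans (by positivity) h1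
  have hx1 : x < 1 := by
    calc x < ((k:ℝ)+1) * ((2:ℝ)^n)⁻¹ := h2
    _ ≤ (2:ℝ)^n * ((2:ℝ)^n)⁻¹ := by
        apply mul_le_mul_of_nonneg_right _ (by positivity)
        have : (k:ℝ) + 1 ≤ ((2^n : ℕ) : ℝ) := by exact_mod_cast hk
        simpa using this
    _ = 1 := by field_simp
  have hfl : ⌊x * 2^n⌋ = (k : ℤ) := by
    apply Int.floor_eq_iff.2
    constructor
    · push_cast
      calc (k:ℝ) = (k:ℝ) * ((2:ℝ)^n)⁻¹ * 2^n := by field_simp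
      _ ≤ x * 2^n := mul_le_mul_of_nonneg_right h1 hp.le
    · push_cast
      calc x * 2^n < ((k:ℝ)+1) * ((2:ℝ)^n)⁻¹ * 2^n := mul_lt_mul_of_pos_right h2 hp
      _ = (k:ℝ) + 1 := by field_simp
  rw [u]
  simp only [if_pos (⟨hx0, hx1⟩ : 0 ≤ x ∧ x < 1), hfl]
  norm_num

lemma u_norm_le (x : ℝ) : ‖u n x‖ ≤ 1 := by
  rw [u]
  split
  · exact le_of_eq (norm_lp_single _)
  · simp

lemma u_norm_mem {x : ℝ} (hx : x ∈ Set.Ico (0:ℝ) 1) : ‖u n x‖ = 1 := by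
  rw [u, if_pos ⟨hx.1, hx.2⟩]
  exact norm_lp_single _

lemma u_norm_eq : (fun x => ‖u n x‖) = (Set.Ico (0:ℝ) 1).indicator (fun _ => 1) := by
  funext x
  by_cases hx : x ∈ Set.Ico (0:ℝ) 1
  · rw [u_norm_mem hx, Set.indicator_of_mem hx]
  · rw [Set.indicator_of_notMem hx, u]
    rw [if_neg (by simpa [Set.mem_Ico] using hx)]
    simp

lemma mem_cell_self {x : ℝ} (hx : 0 ≤ x ∧ x < 1) :
    ⌊x * 2^n⌋.toNat < 2^n ∧
    x ∈ Set.Ico ((⌊x * 2^n⌋.toNat : ℝ) * ((2:ℝ)^n)⁻¹)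
      (((⌊x * 2^n⌋.toNat : ℝ) + 1) * ((2:ℝ)^n)⁻¹) := by
  have hp : (0:ℝ) < 2^n := two_pow_pos
  set b := ⌊x * 2^n⌋.toNat with hb
  have hfl0 : (0:ℤ) ≤ ⌊x * 2^n⌋ := Int.le_floor.2 (by push_cast; exact mul_nonneg hx.1 (by positivity))
  have hcast : (b:ℝ) = ((⌊x * 2^n⌋ : ℤ) : ℝ) := by
    rw [hb]; exact_mod_cast Int.toNat_of_nonneg hfl0
  have hbf : (b:ℝ) ≤ x * 2^n := by rw [hcast]; exact Int.floor_le _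
  have hbf' : x * 2^n < (b:ℝ) + 1 := by rw [hcast]; exact Int.lt_floor_add_one _
  have hblt : b < 2^n := by
    have : (b:ℝ) < 2^n := by
      calc (b:ℝ) ≤ x * 2^n := hbf
      _ < 1 * 2^n := mul_lt_mul_of_pos_right hx.2 hp
      _ = 2^n := by ring
    exact_mod_cast this
  refine ⟨hblt, ?_, ?_⟩
  · rw [← div_le_iff₀ hp] at hbf
    calc (b:ℝ) * ((2:ℝ)^n)⁻¹ = (b:ℝ) / 2^n := by ring
    _ ≤ x := hbf
  · rw [← lt_div_iff₀ hp] at hbf'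
    calc x < ((b:ℝ)+1) / 2^n := hbf'
    _ = ((b:ℝ)+1) * ((2:ℝ)^n)⁻¹ := by ring

lemma u_rep : u n = fun x => ∑ k ∈ range (2^n),
    (Set.Ico ((k : ℝ) * ((2:ℝ)^n)⁻¹) (((k : ℝ) + 1) * ((2:ℝ)^n)⁻¹)).indicator
      (fun _ => lp.single 1 k 1) x := by
  have hp : (0:ℝ) < 2^n := two_pow_pos
  funext x
  by_cases hx : 0 ≤ x ∧ x < 1
  · obtain ⟨hblt, hxb⟩ := mem_cell_self (n := n) hx
    set b := ⌊x * 2^n⌋.toNat with hb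
    rw [Finset.sum_eq_single_of_mem b (mem_range.2 hblt)]
    · rw [Set.indicator_of_mem hxb, u, if_pos hx]
    · intro k hk hkb
      apply Set.indicator_of_notMem
      intro hxk
      have h1 := u_cell (mem_range.1 hk) hxk
      have h2 := u_cell hblt hxb
      have h3 := h1.symm.trans h2
      have h4 := congrFun (congrArg (fun f : EllOne => (f : ℕ → ℝ)) h3) k
      simp only [] at h4
      rw [lp.single_apply_self, lp.single_apply_ne 1 b _ (by exact hkb)] at h4
      norm_num at h4
  · rw [u, if_neg hx]
    symm
    apply Finset.sum_eq_zero
    intro k hk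
    apply Set.indicator_of_notMem
    intro hxk
    have h1 : (0:ℝ) ≤ x := le_trans (by positivity) hxk.1
    have h2 : x < 1 := by
      calc x < ((k:ℝ)+1) * ((2:ℝ)^n)⁻¹ := hxk.2
      _ ≤ (2:ℝ)^n * ((2:ℝ)^n)⁻¹ := by
          apply mul_le_mul_of_nonneg_right _ (by positivity)
          have : (k:ℝ) + 1 ≤ ((2^n : ℕ) : ℝ) := by exact_mod_cast (mem_range.1 hk)
          simpa using this
      _ = 1 := by field_simp
    exact hx ⟨h1, h2⟩

lemma integrable_u : Integrable (u n) := by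
  rw [u_rep]
  apply integrable_finset_sum
  intro k _
  rw [integrable_indicator_iff measurableSet_Ico]
  exact integrableOn_const (by rw [Real.volume_Ico]; exact ENNReal.ofReal_ne_top)

lemma integral_u_norm : ∫ y, ‖u n y‖ = 1 := by
  have : ∫ y, ‖u n y‖ = ∫ y, (Set.Ico (0:ℝ) 1).indicator (fun _ => (1:ℝ)) y := by
    rw [u_norm_eq]
  rw [this, integral_indicator measurableSet_Ico, setIntegral_const]
  simp [Real.volume_Ico]

lemma base_bounds {x : ℝ} (hx : 0 ≤ x ∧ x < 1) :
    ((⌊x * 2^n⌋.toNat : ℝ) ≤ x * 2^n ∧ x * 2^n < (⌊x * 2^n⌋.toNat : ℝ) + 1)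
      ∧ ⌊x * 2^n⌋.toNat < 2^n := by
  have hp : (0:ℝ) < 2^n := two_pow_pos
  have hfl0 : (0:ℤ) ≤ ⌊x * 2^n⌋ :=
    Int.le_floor.2 (by push_cast; exact mul_nonneg hx.1 (by positivity))
  have hcast : ((⌊x * 2^n⌋.toNat : ℕ):ℝ) = ((⌊x * 2^n⌋ : ℤ) : ℝ) := by
    exact_mod_cast Int.toNat_of_nonneg hfl0
  have hbf : ((⌊x * 2^n⌋.toNat : ℕ):ℝ) ≤ x * 2^n := by rw [hcast]; exact Int.floor_le _
  have hbf' : x * 2^n < ((⌊x * 2^n⌋.toNat : ℕ):ℝ) + 1 := by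
    rw [hcast]; exact Int.lt_floor_add_one _
  refine ⟨⟨hbf, hbf'⟩, ?_⟩
  have : ((⌊x * 2^n⌋.toNat : ℕ):ℝ) < 2^n := by
    calc ((⌊x * 2^n⌋.toNat : ℕ):ℝ) ≤ x * 2^n := hbf
    _ < 1 * 2^n := mul_lt_mul_of_pos_right hx.2 hp
    _ = 2^n := by ring
  exact_mod_cast this

lemma integral_cells (a L : ℕ) (h : a + L ≤ 2^n) :
    ∫ y in Set.Ico ((a:ℝ) * ((2:ℝ)^n)⁻¹) (((a:ℝ) + (L:ℝ)) * ((2:ℝ)^n)⁻¹), u n y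
      = ∑ t ∈ range L, ((2:ℝ)^n)⁻¹ • lp.single 1 (a+t) 1 := by
  have hp : (0:ℝ) < 2^n := two_pow_pos
  induction L with
  | zero =>
    simp
  | succ L ih =>
    have hL : a + L ≤ 2^n := by omega
    have h1 : (a:ℝ) * ((2:ℝ)^n)⁻¹ ≤ ((a:ℝ) + L) * ((2:ℝ)^n)⁻¹ := by
      apply mul_le_mul_of_nonneg_right _ (by positivity)
      linarith [Nat.cast_nonneg (α := ℝ) L]
    have h2 : ((a:ℝ) + L) * ((2:ℝ)^n)⁻¹ ≤ ((a:ℝ) + (L+1:ℕ)) * ((2:ℝ)^n)⁻¹ := by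
      apply mul_le_mul_of_nonneg_right _ (by positivity)
      push_cast; linarith
    have hsplit : Set.Ico ((a:ℝ) * ((2:ℝ)^n)⁻¹) (((a:ℝ) + (L+1:ℕ)) * ((2:ℝ)^n)⁻¹)
        = Set.Ico ((a:ℝ) * ((2:ℝ)^n)⁻¹) (((a:ℝ) + L) * ((2:ℝ)^n)⁻¹)
          ∪ Set.Ico (((a:ℝ) + L) * ((2:ℝ)^n)⁻¹) (((a:ℝ) + (L+1:ℕ)) * ((2:ℝ)^n)⁻¹) :=
      (Set.Ico_union_Ico_eq_Ico h1 h2).symm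
    have hlast : ∫ y in Set.Ico (((a:ℝ) + L) * ((2:ℝ)^n)⁻¹)
        (((a:ℝ) + (L+1:ℕ)) * ((2:ℝ)^n)⁻¹), u n y
        = ((2:ℝ)^n)⁻¹ • lp.single 1 (a+L) 1 := by
      have hmem : ∀ y ∈ Set.Ico (((a:ℝ) + L) * ((2:ℝ)^n)⁻¹)
          (((a:ℝ) + (L+1:ℕ)) * ((2:ℝ)^n)⁻¹), u n y = lp.single 1 (a+L) 1 := by
        intro y hy
        apply u_cell (show a + L < 2^n by omega)
        constructor
        · calc ((a+L:ℕ):ℝ) * ((2:ℝ)^n)⁻¹ = ((a:ℝ)+L) * ((2:ℝ)^n)⁻¹ := by push_cast; ring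
          _ ≤ y := hy.1
        · calc y < ((a:ℝ) + (L+1:ℕ)) * ((2:ℝ)^n)⁻¹ := hy.2
          _ = (((a+L:ℕ):ℝ)+1) * ((2:ℝ)^n)⁻¹ := by push_cast; ring
      rw [setIntegral_congr_fun measurableSet_Ico hmem, setIntegral_const,
        measureReal_def, Real.volume_Ico]
      have e1 : ((a:ℝ) + ((L+1:ℕ):ℝ)) * ((2:ℝ)^n)⁻¹ - ((a:ℝ) + (L:ℝ)) * ((2:ℝ)^n)⁻¹
          = ((2:ℝ)^n)⁻¹ := by push_cast; ring
      rw [e1, ENNReal.toReal_ofReal (by positivity)]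
    rw [hsplit, setIntegral_union (Set.Ico_disjoint_Ico_same) measurableSet_Ico
      integrable_u.integrableOn integrable_u.integrableOn, ih hL, hlast,
      Finset.sum_range_succ]

lemma avg_eq {x : ℝ} (hx : 0 ≤ x ∧ x < 1) {j : ℕ} (hj : j ≤ n) :
    dyadicAvg₁ (u n) ((j:ℤ) - n) x
      = ((2:ℝ)^j)⁻¹ • ∑ t ∈ range (2^j),
          lp.single 1 (2^j * (⌊x * 2^n⌋.toNat / 2^j) + t) 1 := by
  have hp : (0:ℝ) < 2^n := two_pow_pos
  have hpj : (0:ℝ) < 2^j := by positivity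
  obtain ⟨⟨hb1, hb2⟩, hblt⟩ := base_bounds (n := n) hx
  set b := ⌊x * 2^n⌋.toNat with hbdef
  set k : ℤ := (j:ℤ) - n with hkdef
  have hpk : (2:ℝ)^k = 2^j * ((2:ℝ)^n)⁻¹ := by
    rw [hkdef, zpow_sub₀ (by norm_num : (2:ℝ) ≠ 0), zpow_natCast, zpow_natCast]
    ring
  have hkpos : (0:ℝ) < (2:ℝ)^k := by rw [hpk]; positivity
  have hxk : x / (2:ℝ)^k = x * 2^n / 2^j := by
    rw [hpk]; field_simp
  set q : ℕ := b / 2^j with hqdef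
  have hq1 : q * 2^j ≤ b := Nat.div_mul_le_self b (2^j)
  have hq2 : b < (q + 1) * 2^j :=
    (Nat.div_lt_iff_lt_mul (by positivity)).1 (Nat.lt_succ_self _)
  have hM : ⌊x / (2:ℝ)^k⌋ = (q : ℤ) := by
    rw [hxk]
    apply Int.floor_eq_iff.2
    refine ⟨?_, ?_⟩
    · rw [le_div_iff₀ hpj]
      calc ((q:ℤ):ℝ) * 2^j = ((q * 2^j : ℕ):ℝ) := by push_cast; ring
      _ ≤ (b:ℝ) := by exact_mod_cast hq1
      _ ≤ x * 2^n := hb1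
    · rw [div_lt_iff₀ hpj]
      calc x * 2^n < (b:ℝ) + 1 := hb2
      _ ≤ (((q + 1) * 2^j : ℕ):ℝ) := by exact_mod_cast hq2
      _ = (((q:ℤ):ℝ) + 1) * 2^j := by push_cast; ring
  have hdiv_lt : q < 2^(n-j) := by
    apply (Nat.div_lt_iff_lt_mul (by positivity)).2
    calc b < 2^n := hblt
    _ = 2^(n-j) * 2^j := by rw [← pow_add, Nat.sub_add_cancel hj]
  have hle : 2^j * q + 2^j ≤ 2^n := by
    calc 2^j * q + 2^j = 2^j * (q + 1) := by ring
    _ ≤ 2^j * 2^(n-j) := Nat.mul_le_mul_left _ hdiv_lt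
    _ = 2^n := by rw [← pow_add, Nat.add_sub_cancel' hj]
  have hlo : (2:ℝ)^k * (⌊x / (2:ℝ)^k⌋ : ℝ) = ((2^j * q : ℕ):ℝ) * ((2:ℝ)^n)⁻¹ := by
    rw [hM, hpk]; push_cast; ring
  have hhi : (2:ℝ)^k * ((⌊x / (2:ℝ)^k⌋ : ℝ) + 1)
      = (((2^j * q : ℕ):ℝ) + ((2^j:ℕ):ℝ)) * ((2:ℝ)^n)⁻¹ := by
    rw [hM, hpk]; push_cast; ring
  simp only [dyadicAvg₁]
  rw [hlo, hhi, integral_cells _ _ (by omega), Real.volume_Ico]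
  have hvol : ((((2^j * q : ℕ):ℝ) + ((2^j:ℕ):ℝ)) * ((2:ℝ)^n)⁻¹
      - ((2^j * q : ℕ):ℝ) * ((2:ℝ)^n)⁻¹) = 2^j * ((2:ℝ)^n)⁻¹ := by
    push_cast; ring
  rw [hvol, ENNReal.toReal_ofReal (by positivity), Finset.smul_sum, Finset.smul_sum]
  apply Finset.sum_congr rfl
  intro t _
  rw [smul_smul]
  congr 1
  field_simp

lemma avg_small {x : ℝ} (hx : 0 ≤ x ∧ x < 1) {k : ℤ} (hk : k ≤ -(n:ℤ)) :
    dyadicAvg₁ (u n) k x = u n x := by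
  have hp : (0:ℝ) < 2^n := two_pow_pos
  obtain ⟨⟨hb1, hb2⟩, hblt⟩ := base_bounds (n := n) hx
  set b := ⌊x * 2^n⌋.toNat with hbdef
  have hkpos : (0:ℝ) < (2:ℝ)^k := zpow_pos (by norm_num) k
  set d : ℕ := (-(n:ℤ) - k).toNat with hddef
  have hdk : (d:ℤ) = -(n:ℤ) - k := Int.toNat_of_nonneg (by omega)
  have hd : (2:ℝ)^k * 2^d = ((2:ℝ)^n)⁻¹ := by
    have : (2:ℝ)^k * (2:ℝ)^((d:ℤ)) = (2:ℝ)^(k + (d:ℤ)) := (zpow_add₀ (by norm_num) _ _).symm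
    rw [zpow_natCast] at this
    rw [this, hdk]
    have : k + (-(n:ℤ) - k) = -(n:ℤ) := by ring
    rw [this, zpow_neg, zpow_natCast]
  have hxlo : ((b:ℝ)) * ((2:ℝ)^n)⁻¹ ≤ x := by
    rw [← div_le_iff₀ hp] at hb1
    calc (b:ℝ) * ((2:ℝ)^n)⁻¹ = (b:ℝ) / 2^n := by ring
    _ ≤ x := hb1
  have hxhi : x < ((b:ℝ) + 1) * ((2:ℝ)^n)⁻¹ := by
    rw [← lt_div_iff₀ hp] at hb2
    calc x < ((b:ℝ)+1) / 2^n := hb2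
    _ = ((b:ℝ)+1) * ((2:ℝ)^n)⁻¹ := by ring
  set M : ℤ := ⌊x / (2:ℝ)^k⌋ with hMdef
  have hMl : ((2^d * b : ℕ) : ℤ) ≤ M := by
    apply Int.le_floor.2
    rw [le_div_iff₀ hkpos]
    push_cast
    calc (2:ℝ)^d * b * (2:ℝ)^k = (b:ℝ) * ((2:ℝ)^k * 2^d) := by ring
    _ = (b:ℝ) * ((2:ℝ)^n)⁻¹ := by rw [hd]
    _ ≤ x := hxlo
  have hMu : M + 1 ≤ ((2^d * (b+1) : ℕ) : ℤ) := by
    have : M < ((2^d * (b+1) : ℕ) : ℤ) := by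
      apply Int.floor_lt.2
      rw [div_lt_iff₀ hkpos]
      push_cast
      calc x < ((b:ℝ)+1) * ((2:ℝ)^n)⁻¹ := hxhi
      _ = (2:ℝ)^d * ((b:ℝ)+1) * (2:ℝ)^k := by rw [← hd]; ring
    omega
  have e2 : (b:ℝ) * ((2:ℝ)^n)⁻¹ = (2:ℝ)^k * ((2^d * b : ℕ):ℝ) := by
    push_cast
    rw [← hd]
    ring
  have e3 : (2:ℝ)^k * ((2^d * (b+1) : ℕ):ℝ) = ((b:ℝ)+1) * ((2:ℝ)^n)⁻¹ := by
    push_cast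
    rw [← hd]
    ring
  have e4 : (2:ℝ)^k * ((2^d * b : ℕ):ℝ) ≤ (2:ℝ)^k * (M:ℝ) := by
    apply mul_le_mul_of_nonneg_left _ hkpos.le
    exact_mod_cast hMl
  have e5 : (2:ℝ)^k * ((M:ℝ)+1) ≤ (2:ℝ)^k * ((2^d * (b+1) : ℕ):ℝ) := by
    apply mul_le_mul_of_nonneg_left _ hkpos.le
    have : ((M:ℝ) + 1) ≤ (((2^d * (b+1) : ℕ):ℤ):ℝ) := by exact_mod_cast hMu
    exact_mod_cast this
  have hsub : Set.Ico ((2:ℝ)^k * (M:ℝ)) ((2:ℝ)^k * ((M:ℝ)+1))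
      ⊆ Set.Ico ((b:ℝ) * ((2:ℝ)^n)⁻¹) (((b:ℝ)+1) * ((2:ℝ)^n)⁻¹) :=
    Set.Ico_subset_Ico (by rw [e2]; exact e4) (le_trans e5 (le_of_eq e3))
  have hux : u n x = lp.single 1 b 1 := u_cell hblt ⟨hxlo, hxhi⟩
  have hconst : ∀ y ∈ Set.Ico ((2:ℝ)^k * (M:ℝ)) ((2:ℝ)^k * ((M:ℝ)+1)),
      u n y = lp.single 1 b 1 := fun y hy => u_cell hblt (hsub hy)
  simp only [dyadicAvg₁]
  rw [← hMdef, setIntegral_congr_fun measurableSet_Ico hconst, setIntegral_const,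
    measureReal_def, Real.volume_Ico]
  have hvol : (2:ℝ)^k * ((M:ℝ)+1) - (2:ℝ)^k * (M:ℝ) = (2:ℝ)^k := by ring
  rw [hvol, ENNReal.toReal_ofReal hkpos.le, smul_smul,
    inv_mul_cancel₀ hkpos.ne', one_smul, hux]

lemma avg_norm_le_aux (k : ℤ) (x : ℝ) :
    ‖dyadicAvg₁ (u n) k x‖ = ((2:ℝ)^k)⁻¹ * ‖∫ y in Set.Ico ((2:ℝ)^k * (⌊x / (2:ℝ)^k⌋:ℝ))
      ((2:ℝ)^k * ((⌊x / (2:ℝ)^k⌋:ℝ)+1)), u n y‖ := by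
  have hkpos : (0:ℝ) < (2:ℝ)^k := zpow_pos (by norm_num) k
  simp only [dyadicAvg₁]
  rw [Real.volume_Ico]
  have hvol : (2:ℝ)^k * ((⌊x / (2:ℝ)^k⌋:ℝ)+1) - (2:ℝ)^k * (⌊x / (2:ℝ)^k⌋:ℝ) = (2:ℝ)^k := by
    ring
  rw [hvol, ENNReal.toReal_ofReal hkpos.le, norm_smul, Real.norm_eq_abs,
    abs_of_pos (by positivity)]

lemma avg_norm_le_inv (k : ℤ) (x : ℝ) : ‖dyadicAvg₁ (u n) k x‖ ≤ ((2:ℝ)^k)⁻¹ := by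
  have hkpos : (0:ℝ) < (2:ℝ)^k := zpow_pos (by norm_num) k
  rw [avg_norm_le_aux]
  set S := Set.Ico ((2:ℝ)^k * (⌊x / (2:ℝ)^k⌋:ℝ)) ((2:ℝ)^k * ((⌊x / (2:ℝ)^k⌋:ℝ)+1)) with hS
  have h1 : ‖∫ y in S, u n y‖ ≤ ∫ y in S, ‖u n y‖ := norm_integral_le_integral_norm _
  have h2 : ∫ y in S, ‖u n y‖ ≤ ∫ y, ‖u n y‖ :=
    setIntegral_le_integral integrable_u.norm
      (Filter.Eventually.of_forall (fun y => norm_nonneg _))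
  rw [integral_u_norm] at h2
  have h3 := mul_le_mul_of_nonneg_left (le_trans h1 h2)
    (show (0:ℝ) ≤ ((2:ℝ)^k)⁻¹ by positivity)
  simpa using h3

lemma avg_norm_le_one (k : ℤ) (x : ℝ) : ‖dyadicAvg₁ (u n) k x‖ ≤ 1 := by
  have hkpos : (0:ℝ) < (2:ℝ)^k := zpow_pos (by norm_num) k
  rw [avg_norm_le_aux]
  set S := Set.Ico ((2:ℝ)^k * (⌊x / (2:ℝ)^k⌋:ℝ)) ((2:ℝ)^k * ((⌊x / (2:ℝ)^k⌋:ℝ)+1)) with hS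
  have h1 : ‖∫ y in S, u n y‖ ≤ ∫ y in S, ‖u n y‖ := norm_integral_le_integral_norm _
  have h2 : ∫ y in S, ‖u n y‖ ≤ ∫ _y in S, (1:ℝ) := by
    apply setIntegral_mono_on integrable_u.norm.integrableOn
      (integrableOn_const ?_) (by rw [hS]; exact measurableSet_Ico)
      (fun y _ => u_norm_le y)
    rw [hS, Real.volume_Ico]
    exact ENNReal.ofReal_ne_top
  have h3 : ∫ _y in S, (1:ℝ) = (2:ℝ)^k := by
    rw [setIntegral_const, smul_eq_mul, mul_one, hS, measureReal_def, Real.volume_Ico,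
      show (2:ℝ)^k * ((⌊x / (2:ℝ)^k⌋:ℝ)+1) - (2:ℝ)^k * (⌊x / (2:ℝ)^k⌋:ℝ) = (2:ℝ)^k from by ring,
      ENNReal.toReal_ofReal hkpos.le]
  have h4 := mul_le_mul_of_nonneg_left (le_trans h1 (h2.trans_eq h3))
    (show (0:ℝ) ≤ ((2:ℝ)^k)⁻¹ by positivity)
  rw [inv_mul_cancel₀ hkpos.ne'] at h4
  exact h4

lemma radE_nonneg {ι X : Type*} [DecidableEq ι] [NormedAddCommGroup X]
    (s : Finset ι) (f : ι → X) : 0 ≤ radE s f := by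
  apply mul_nonneg (by positivity)
  exact Finset.sum_nonneg fun σ _ => norm_nonneg _

lemma card_sigma {ι : Type*} [DecidableEq ι] (s : Finset ι) :
    Fintype.card ({i // i ∈ s} → Bool) = 2 ^ s.card := by
  rw [Fintype.card_fun, Fintype.card_bool, Fintype.card_coe]

lemma radE_ge {ι X : Type*} [DecidableEq ι] [NormedAddCommGroup X]
    (s : Finset ι) (f : ι → X) (B : ℝ)
    (hB : ∀ σ : {i // i ∈ s} → Bool,
      B ≤ ‖∑ i : {i // i ∈ s}, (if σ i then f i.1 else - f i.1)‖) :
    B ≤ radE s f := by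
  rw [radE]
  have h1 : (Finset.univ : Finset ({i // i ∈ s} → Bool)).card • B
      ≤ ∑ σ : {i // i ∈ s} → Bool, ‖∑ i : {i // i ∈ s}, (if σ i then f i.1 else - f i.1)‖ :=
    Finset.card_nsmul_le_sum _ _ _ (fun σ _ => hB σ)
  rw [Finset.card_univ, card_sigma, nsmul_eq_mul] at h1
  push_cast at h1
  have hp : (0:ℝ) < 2 ^ s.card := by positivity
  have h2 : B = ((2:ℝ)^s.card)⁻¹ * ((2:ℝ)^s.card * B) := by field_simp
  rw [h2]
  exact mul_le_mul_of_nonneg_left h1 (by positivity)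

lemma sum_flip_zero {I : Type*} [Fintype I] [DecidableEq I] {i j : I} (hij : i ≠ j)
    (c : I → ℝ) :
    ∑ σ : I → Bool, (if σ i then c i else -c i) * (if σ j then c j else -c j) = 0 := by
  have hinv : Function.Involutive (fun σ : I → Bool => Function.update σ i (!σ i)) := by
    intro σ
    funext t
    by_cases ht : t = i
    · subst ht; simp
    · simp [Function.update_of_ne ht]
  set e := Function.Involutive.toPerm _ hinv with he
  have hsum := Equiv.sum_comp e
      (fun σ : I → Bool => (if σ i then c i else -c i) * (if σ j then c j else -c j))
  have ecoe : ∀ σ : I → Bool, e σ = Function.update σ i (!σ i) := fun σ => rfl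
  have h2 : ∀ σ : I → Bool,
      (if (e σ) i then c i else -c i) * (if (e σ) j then c j else -c j)
      = -((if σ i then c i else -c i) * (if σ j then c j else -c j)) := by
    intro σ
    have e1 : (e σ) i = !σ i := by rw [ecoe]; simp
    have e2 : (e σ) j = σ j := by rw [ecoe]; exact Function.update_of_ne (Ne.symm hij) _ _
    rw [e1, e2]
    cases σ i <;> cases σ j <;> simp <;> ring
  rw [Finset.sum_congr rfl (fun σ _ => h2 σ), Finset.sum_neg_distrib] at hsum
  linarith

lemma sum_sq_signs {I : Type*} [Fintype I] [DecidableEq I] (A : Finset I) (c : I → ℝ) :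
    ∑ σ : I → Bool, (∑ i ∈ A, (if σ i then c i else -c i))^2
      = 2 ^ Fintype.card I * ∑ i ∈ A, (c i)^2 := by
  have expand : ∀ σ : I → Bool, (∑ i ∈ A, (if σ i then c i else -c i))^2
      = ∑ i ∈ A, ∑ j ∈ A, (if σ i then c i else -c i) * (if σ j then c j else -c j) := by
    intro σ; rw [sq, Finset.sum_mul_sum]
  rw [Finset.sum_congr rfl (fun σ _ => expand σ), Finset.sum_comm]
  have swap2 : ∀ i ∈ A, (∑ σ : I → Bool, ∑ j ∈ A,
      (if σ i then c i else -c i) * (if σ j then c j else -c j))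
      = ∑ j ∈ A, ∑ σ : I → Bool,
      (if σ i then c i else -c i) * (if σ j then c j else -c j) :=
    fun i _ => Finset.sum_comm
  rw [Finset.sum_congr rfl swap2]
  have step : ∀ i ∈ A, (∑ j ∈ A, ∑ σ : I → Bool,
      (if σ i then c i else -c i) * (if σ j then c j else -c j))
      = 2 ^ Fintype.card I * c i ^ 2 := by
    intro i hi
    rw [Finset.sum_eq_single_of_mem i hi]
    · have hdiag : ∀ σ : I → Bool,
          (if σ i then c i else -c i) * (if σ i then c i else -c i) = c i ^ 2 := by
        intro σ; cases σ i <;> simp <;> ring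
      rw [Finset.sum_congr rfl (fun σ _ => hdiag σ), Finset.sum_const, Finset.card_univ,
        Fintype.card_fun, Fintype.card_bool, nsmul_eq_mul]
      push_cast
      ring
    · intro j _ hji
      exact sum_flip_zero (Ne.symm hji) c
  rw [Finset.sum_congr rfl step, ← Finset.mul_sum]

lemma khintchine_bound {I : Type*} [Fintype I] [DecidableEq I] (A : Finset I) (c : I → ℝ)
    (hc : ∑ i ∈ A, c i ^ 2 ≤ 1) :
    ∑ σ : I → Bool, |∑ i ∈ A, (if σ i then c i else -c i)| ≤ 2 ^ Fintype.card I := by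
  have hCS := Finset.sum_mul_sq_le_sq_mul_sq Finset.univ
    (fun σ : I → Bool => |∑ i ∈ A, (if σ i then c i else -c i)|) (fun _ => 1)
  simp only [mul_one, one_pow] at hCS
  have h1 : ∑ σ : I → Bool, |∑ i ∈ A, (if σ i then c i else -c i)|^2
      = 2 ^ Fintype.card I * ∑ i ∈ A, c i ^ 2 := by
    rw [← sum_sq_signs A c]
    exact Finset.sum_congr rfl (fun σ _ => sq_abs _)
  have h2 : (∑ _σ : I → Bool, (1:ℝ)) = 2 ^ Fintype.card I := by
    rw [Finset.sum_const, Finset.card_univ, Fintype.card_fun, Fintype.card_bool,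
      nsmul_eq_mul, mul_one]
    push_cast
    ring
  rw [h1, h2] at hCS
  have hp : (0:ℝ) ≤ 2 ^ Fintype.card I := by positivity
  have h3 : (∑ σ : I → Bool, |∑ i ∈ A, (if σ i then c i else -c i)|)^2
      ≤ ((2:ℝ) ^ Fintype.card I)^2 := by
    refine hCS.trans ?_
    nlinarith
  have h4 : (0:ℝ) ≤ ∑ σ : I → Bool, |∑ i ∈ A, (if σ i then c i else -c i)| :=
    Finset.sum_nonneg (fun σ _ => abs_nonneg _)
  nlinarith [sq_nonneg ((∑ σ : I → Bool, |∑ i ∈ A, (if σ i then c i else -c i)|) + 2 ^ Fintype.card I)]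

lemma sum_inv_pow_le (F : Finset ℕ) : ∑ j ∈ F, ((2:ℝ)^j)⁻¹ ≤ 2 := by
  have hsub : F ⊆ Finset.range (F.sup id + 1) := fun j hj =>
    Finset.mem_range.2 (Nat.lt_succ_of_le (Finset.le_sup (f := id) hj))
  have h1 : ∑ j ∈ F, ((2:ℝ)^j)⁻¹ ≤ ∑ j ∈ Finset.range (F.sup id + 1), ((2:ℝ)^j)⁻¹ :=
    Finset.sum_le_sum_of_subset_of_nonneg hsub (fun j _ _ => by positivity)
  have h2 : ∑ j ∈ Finset.range (F.sup id + 1), ((2:ℝ)^j)⁻¹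
      = ∑ j ∈ Finset.range (F.sup id + 1), ((1:ℝ)/2)^j := by
    apply Finset.sum_congr rfl
    intro j _
    rw [one_div, inv_pow]
  rw [h2] at h1
  exact h1.trans (sum_geometric_two_le _)

lemma sum_zpow_le (F : Finset ℤ) (hF : ∀ k ∈ F, 1 ≤ k) : ∑ k ∈ F, ((2:ℝ)^k)⁻¹ ≤ 2 := by
  have heq : ∑ j ∈ F.image Int.toNat, ((2:ℝ)^j)⁻¹ = ∑ k ∈ F, ((2:ℝ)^k)⁻¹ := by
    rw [Finset.sum_image (by
      intro a ha b hb h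
      have h1 := hF a ha
      have h2 := hF b hb
      omega)]
    apply Finset.sum_congr rfl
    intro k hk
    have h1 : ((k.toNat : ℤ)) = k := Int.toNat_of_nonneg (by linarith [hF k hk])
    rw [← zpow_natCast (2:ℝ) k.toNat, h1]
  rw [← heq]
  exact sum_inv_pow_le _

lemma tail_bound (d a : ℕ) :
    ∑ i ∈ range d, ((2:ℝ)^(2^(a+i)))⁻¹ ≤ 2 * ((2:ℝ)^(2^a))⁻¹ := by
  induction d generalizing a with
  | zero => simp
  | succ d ih =>
    rw [Finset.sum_range_succ']
    have hre : ∑ i ∈ range d, ((2:ℝ)^(2^(a+(i+1))))⁻¹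
        = ∑ i ∈ range d, ((2:ℝ)^(2^((a+1)+i)))⁻¹ := by
      apply Finset.sum_congr rfl
      intro i _
      rw [show a+(i+1) = (a+1)+i from by omega]
    rw [hre]
    have h1 := ih (a+1)
    set y : ℝ := (2:ℝ)^(2^a) with hy
    have hy2 : (2:ℝ) ≤ y := by
      rw [hy]
      calc (2:ℝ) = 2^1 := by norm_num
      _ ≤ 2^(2^a) := by
          apply pow_le_pow_right₀ (by norm_num)
          exact Nat.one_le_two_pow
    have hysq : (2:ℝ)^(2^(a+1)) = y^2 := by
      rw [hy, ← pow_mul]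
      congr 1
    rw [hysq] at h1
    have hypos : (0:ℝ) < y := by linarith
    have hinv : y⁻¹ ≤ 2⁻¹ := by
      exact inv_anti₀ (by norm_num) hy2
    have hsq : (y^2)⁻¹ = y⁻¹ * y⁻¹ := by rw [sq, mul_inv]
    have hinvpos : (0:ℝ) < y⁻¹ := by positivity
    have h2 : 2 * (y^2)⁻¹ + y⁻¹ ≤ 2 * y⁻¹ := by
      rw [hsq]
      nlinarith
    have h3 : ∑ i ∈ range d, ((2:ℝ)^(2^((a+1)+i)))⁻¹ + ((2:ℝ)^(2^(a+0)))⁻¹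
        ≤ 2 * (y^2)⁻¹ + y⁻¹ := by
      apply add_le_add h1
      rw [show a+0 = a from by omega, ← hy]
    exact h3.trans h2

lemma radE_upper {x : ℝ} (hx : 0 ≤ x ∧ x < 1)
    (P : {p : Finset ℤ × (ℤ → ℝ) // ∑ k ∈ p.1, (p.2 k)^2 ≤ 1}) :
    radE P.1.1 (fun k => P.1.2 k • dyadicAvg₁ (u n) k x) ≤ (n:ℝ) + 3 := by
  obtain ⟨⟨s, lam⟩, hlam⟩ := P
  simp only at hlam ⊢
  have hlam1 : ∀ k ∈ s, |lam k| ≤ 1 := by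
    intro k hk
    have h1 : lam k ^ 2 ≤ 1 := le_trans (Finset.single_le_sum (f := fun k => lam k ^ 2)
      (fun i _ => sq_nonneg _) hk) hlam
    nlinarith [abs_nonneg (lam k), sq_abs (lam k)]
  set f : ℤ → EllOne := fun k => lam k • dyadicAvg₁ (u n) k x with hf
  rw [radE]
  set A : Finset {i // i ∈ s} := Finset.univ.filter (fun i => i.1 ≤ -(n:ℤ)) with hA
  set T : ({i // i ∈ s} → Bool) → ℝ :=
    fun σ => ∑ i ∈ A, (if σ i then lam i.1 else -lam i.1) with hT
  have hper : ∀ σ : {i // i ∈ s} → Bool,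
      ‖∑ i : {i // i ∈ s}, (if σ i then f i.1 else - f i.1)‖
      ≤ |T σ| + ((n:ℝ) + 2) := by
    intro σ
    have hsplit : ∑ i : {i // i ∈ s}, (if σ i then f i.1 else - f i.1)
        = (∑ i ∈ A, (if σ i then f i.1 else - f i.1))
          + ∑ i ∈ Finset.univ.filter (fun i : {i // i ∈ s} => ¬ (i.1 ≤ -(n:ℤ))),
            (if σ i then f i.1 else - f i.1) :=
      (Finset.sum_filter_add_sum_filter_not Finset.univ _ _).symm
    have hfar : (∑ i ∈ A, (if σ i then f i.1 else - f i.1)) = T σ • (u n x) := by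
      rw [hT]
      simp only
      rw [Finset.sum_smul]
      apply Finset.sum_congr rfl
      intro i hi
      have hk : i.1 ≤ -(n:ℤ) := (Finset.mem_filter.1 hi).2
      rw [hf]
      simp only
      rw [avg_small hx hk]
      cases σ i <;> simp [neg_smul]
    have hfarnorm : ‖T σ • (u n x)‖ = |T σ| := by
      rw [norm_smul, Real.norm_eq_abs, u_norm_mem ⟨hx.1, hx.2⟩, mul_one]
    have hrest : ‖∑ i ∈ Finset.univ.filter (fun i : {i // i ∈ s} => ¬ (i.1 ≤ -(n:ℤ))),
        (if σ i then f i.1 else - f i.1)‖ ≤ (n:ℝ) + 2 := by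
      have hb1 : ‖∑ i ∈ Finset.univ.filter (fun i : {i // i ∈ s} => ¬ (i.1 ≤ -(n:ℤ))),
          (if σ i then f i.1 else - f i.1)‖
          ≤ ∑ i ∈ Finset.univ.filter (fun i : {i // i ∈ s} => ¬ (i.1 ≤ -(n:ℤ))), ‖f i.1‖ := by
        refine (norm_sum_le _ _).trans ?_
        apply Finset.sum_le_sum
        intro i _
        cases σ i <;> simp
      refine hb1.trans ?_
      set Ac := Finset.univ.filter (fun i : {i // i ∈ s} => ¬ (i.1 ≤ -(n:ℤ))) with hAc
      have hsplit2 : ∑ i ∈ Ac, ‖f i.1‖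
          = (∑ i ∈ Ac.filter (fun i => i.1 ≤ 0), ‖f i.1‖)
            + ∑ i ∈ Ac.filter (fun i => ¬ (i.1 ≤ 0)), ‖f i.1‖ :=
        (Finset.sum_filter_add_sum_filter_not Ac _ _).symm
      have hmid : ∑ i ∈ Ac.filter (fun i => i.1 ≤ 0), ‖f i.1‖ ≤ (n:ℝ) := by
        have h1 : ∀ i ∈ Ac.filter (fun i : {i // i ∈ s} => i.1 ≤ 0), ‖f i.1‖ ≤ 1 := by
          intro i _
          rw [hf]
          simp only
          rw [norm_smul, Real.norm_eq_abs]
          exact mul_le_one₀ (hlam1 i.1 i.2) (norm_nonneg _) (avg_norm_le_one _ _)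
        have h2 := Finset.sum_le_card_nsmul _ _ _ h1
        rw [nsmul_eq_mul, mul_one] at h2
        refine h2.trans ?_
        have h3 : (Ac.filter (fun i : {i // i ∈ s} => i.1 ≤ 0)).card
            ≤ (Finset.Icc (-(n:ℤ)+1) 0).card := by
          apply Finset.card_le_card_of_injOn (fun i => i.1)
          · intro i hi
            simp only [hAc, Finset.mem_filter, Finset.mem_univ, true_and] at hi
            simp only [Finset.coe_Icc, Finset.coe_filter, Set.mem_setOf_eq, Finset.mem_coe, Finset.mem_filter, Finset.mem_univ, true_and, Finset.mem_Icc, Set.mem_Icc] at hi ⊢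
            omega
          · intro a _ b _ h
            exact Subtype.ext h
        rw [Int.card_Icc] at h3
        have h4 : (0 + 1 - (-(n:ℤ) + 1)).toNat = n := by omega
        rw [h4] at h3
        exact_mod_cast h3
      have hpos : ∑ i ∈ Ac.filter (fun i => ¬ (i.1 ≤ 0)), ‖f i.1‖ ≤ 2 := by
        have h1 : ∀ i ∈ Ac.filter (fun i : {i // i ∈ s} => ¬ (i.1 ≤ 0)),
            ‖f i.1‖ ≤ ((2:ℝ)^(i.1))⁻¹ := by
          intro i _
          rw [hf]
          simp only
          rw [norm_smul, Real.norm_eq_abs]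
          calc |lam i.1| * ‖dyadicAvg₁ (u n) i.1 x‖ ≤ 1 * ((2:ℝ)^(i.1))⁻¹ :=
            mul_le_mul (hlam1 i.1 i.2) (avg_norm_le_inv _ _) (norm_nonneg _) zero_le_one
          _ = ((2:ℝ)^(i.1))⁻¹ := one_mul _
        refine (Finset.sum_le_sum h1).trans ?_
        have h2 : ∑ i ∈ Ac.filter (fun i : {i // i ∈ s} => ¬ (i.1 ≤ 0)), ((2:ℝ)^(i.1))⁻¹
            = ∑ k ∈ (Ac.filter (fun i : {i // i ∈ s} => ¬ (i.1 ≤ 0))).image (fun i => i.1),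
              ((2:ℝ)^k)⁻¹ :=
          (Finset.sum_image (f := fun k : ℤ => ((2:ℝ)^k)⁻¹)
            (g := fun i : {i // i ∈ s} => i.1)
            (fun a _ b _ h => Subtype.ext h)).symm
        rw [h2]
        apply sum_zpow_le
        intro k hk
        rw [Finset.mem_image] at hk
        obtain ⟨i, hi, rfl⟩ := hk
        simp only [Finset.mem_filter] at hi
        omega
      rw [hsplit2]
      linarith
    calc ‖∑ i : {i // i ∈ s}, (if σ i then f i.1 else - f i.1)‖
        = ‖(∑ i ∈ A, (if σ i then f i.1 else - f i.1))
          + ∑ i ∈ Finset.univ.filter (fun i : {i // i ∈ s} => ¬ (i.1 ≤ -(n:ℤ))),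
            (if σ i then f i.1 else - f i.1)‖ := by rw [← hsplit]
    _ ≤ ‖∑ i ∈ A, (if σ i then f i.1 else - f i.1)‖
          + ‖∑ i ∈ Finset.univ.filter (fun i : {i // i ∈ s} => ¬ (i.1 ≤ -(n:ℤ))),
            (if σ i then f i.1 else - f i.1)‖ := norm_add_le _ _
    _ ≤ |T σ| + ((n:ℝ) + 2) := by
        rw [hfar, hfarnorm]
        exact add_le_add le_rfl hrest
  have hkh : ∑ σ : {i // i ∈ s} → Bool, |T σ| ≤ 2 ^ s.card := by
    have hc : ∑ i ∈ A, (lam i.1) ^ 2 ≤ 1 := by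
      refine le_trans ?_ hlam
      have h1 : ∑ i ∈ A, (lam i.1) ^ 2 ≤ ∑ i : {i // i ∈ s}, (lam i.1) ^ 2 :=
        Finset.sum_le_sum_of_subset_of_nonneg (Finset.filter_subset _ _)
          (fun i _ _ => sq_nonneg _)
      rw [Finset.sum_coe_sort s (fun k => lam k ^ 2)] at h1
      exact h1
    have := khintchine_bound A (fun i => lam i.1) hc
    rw [Fintype.card_coe] at this
    exact this
  have hsum : ∑ σ : {i // i ∈ s} → Bool,
      ‖∑ i : {i // i ∈ s}, (if σ i then f i.1 else - f i.1)‖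
      ≤ 2 ^ s.card * ((n:ℝ) + 3) := by
    calc ∑ σ : {i // i ∈ s} → Bool,
        ‖∑ i : {i // i ∈ s}, (if σ i then f i.1 else - f i.1)‖
        ≤ ∑ σ : {i // i ∈ s} → Bool, (|T σ| + ((n:ℝ) + 2)) :=
          Finset.sum_le_sum (fun σ _ => hper σ)
    _ = (∑ σ : {i // i ∈ s} → Bool, |T σ|) + 2 ^ s.card * ((n:ℝ) + 2) := by
        rw [Finset.sum_add_distrib, Finset.sum_const, Finset.card_univ, card_sigma,
          nsmul_eq_mul]
        push_cast
        ring
    _ ≤ 2 ^ s.card + 2 ^ s.card * ((n:ℝ) + 2) := by linarith [hkh]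
    _ = 2 ^ s.card * ((n:ℝ) + 3) := by ring
  have hp : (0:ℝ) < 2 ^ s.card := by positivity
  calc ((2:ℝ) ^ s.card)⁻¹ * ∑ σ : {i // i ∈ s} → Bool,
      ‖∑ i : {i // i ∈ s}, (if σ i then f i.1 else - f i.1)‖
      ≤ ((2:ℝ) ^ s.card)⁻¹ * (2 ^ s.card * ((n:ℝ) + 3)) :=
        mul_le_mul_of_nonneg_left hsum (by positivity)
  _ = (n:ℝ) + 3 := by field_simp

lemma rmf_bddAbove {x : ℝ} (hx : 0 ≤ x ∧ x < 1) :
    BddAbove (Set.range (fun P : {p : Finset ℤ × (ℤ → ℝ) // ∑ k ∈ p.1, (p.2 k)^2 ≤ 1} =>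
      radE P.1.1 (fun k => P.1.2 k • dyadicAvg₁ (u n) k x))) := by
  refine ⟨(n:ℝ) + 3, ?_⟩
  rintro y ⟨P, rfl⟩
  exact radE_upper hx P

lemma single_apply' (i c : ℕ) :
    (lp.single (E := fun _ : ℕ => ℝ) 1 i (1:ℝ) : ℕ → ℝ) c = if c = i then 1 else 0 := by
  by_cases h : c = i
  · subst h; rw [lp.single_apply_self, if_pos rfl]
  · rw [lp.single_apply_ne 1 i _ h, if_neg h]

lemma sum_single_apply (a L c : ℕ) :
    ((∑ t ∈ range L, lp.single (E := fun _ : ℕ => ℝ) 1 (a+t) (1:ℝ)) : ℕ → ℝ) c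
      = if a ≤ c ∧ c < a + L then 1 else 0 := by
  rw [Finset.sum_apply]
  have h1 : ∀ t ∈ range L, (lp.single (E := fun _ : ℕ => ℝ) 1 (a+t) (1:ℝ) : ℕ → ℝ) c
      = if c = a + t then 1 else 0 := fun t _ => single_apply' _ _
  rw [Finset.sum_congr rfl h1]
  by_cases h : a ≤ c ∧ c < a + L
  · rw [if_pos h, Finset.sum_eq_single_of_mem (c - a) (Finset.mem_range.2 (by omega))]
    · rw [if_pos (by omega)]
    · intro t ht htne
      have := Finset.mem_range.1 ht
      rw [if_neg (by omega)]
  · rw [if_neg h]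
    apply Finset.sum_eq_zero
    intro t ht
    have := Finset.mem_range.1 ht
    rw [if_neg (by omega)]

lemma key {m : ℕ} (hm : 1 ≤ m) {x : ℝ} (hx : 0 ≤ x ∧ x < 1)
    (e : ℤ → ℝ) (he : ∀ k, e k = 1 ∨ e k = -1) :
    (m:ℝ) * ((Real.sqrt (m+1))⁻¹ / 4)
      ≤ ‖∑ i ∈ range (m+1), e (((2^i : ℕ) : ℤ) - ((2^m : ℕ) : ℤ)) •
          ((Real.sqrt (m+1))⁻¹ • dyadicAvg₁ (u (2^m)) (((2^i : ℕ) : ℤ) - ((2^m : ℕ) : ℤ)) x)‖ := by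
  set b : ℕ := ⌊x * 2^(2^m)⌋.toNat with hb
  set lam : ℝ := (Real.sqrt (m+1))⁻¹ with hlam
  have hlampos : 0 < lam := by
    rw [hlam]
    apply inv_pos.2
    apply Real.sqrt_pos.2
    positivity
  set ee : ℕ → ℝ := fun i => e (((2^i : ℕ) : ℤ) - ((2^m : ℕ) : ℤ)) with hee
  have habs : ∀ i, |ee i| = 1 := by
    intro i
    rcases he (((2^i : ℕ) : ℤ) - ((2^m : ℕ) : ℤ)) with h | h <;> simp only [hee] <;>
      rw [h] <;> norm_num
  set J : ℕ → ℕ := fun i => 2^(2^i) with hJ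
  have hJpos : ∀ i, 0 < J i := fun i => by rw [hJ]; positivity
  have hJr : ∀ i, ((J i : ℕ):ℝ) = (2:ℝ)^(2^i) := fun i => by rw [hJ]; push_cast; ring
  have hJrpos : ∀ i, (0:ℝ) < (J i : ℝ) := fun i => by rw [hJr]; positivity
  set blk : ℕ → ℕ := fun i => J i * (b / J i) with hblk
  set D : ℕ → Finset ℕ := fun i => Finset.Ico (blk i) (blk i + J i) with hD
  -- rewrite averages
  have havg : ∀ i ∈ range (m+1),
      e (((2^i : ℕ) : ℤ) - ((2^m : ℕ) : ℤ)) •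
          ((Real.sqrt (m+1))⁻¹ • dyadicAvg₁ (u (2^m)) (((2^i : ℕ) : ℤ) - ((2^m : ℕ) : ℤ)) x)
      = (ee i * (lam * ((J i : ℝ))⁻¹)) •
          (∑ t ∈ range (J i), lp.single 1 (blk i + t) 1) := by
    intro i hi
    have hi' : i ≤ m := by have := Finset.mem_range.1 hi; omega
    have hj : 2^i ≤ 2^m := Nat.pow_le_pow_right (by norm_num) hi'
    have h1 := avg_eq (n := 2^m) hx (j := 2^i) hj
    rw [h1, smul_smul, smul_smul, mul_assoc]
    simp only [hee, hblk, hJ, hb, hlam]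
    norm_cast
  rw [Finset.sum_congr rfl havg]
  set w : EllOne := ∑ i ∈ range (m+1),
      (ee i * (lam * ((J i : ℝ))⁻¹)) • (∑ t ∈ range (J i), lp.single 1 (blk i + t) 1)
    with hw
  -- coordinates of w
  have hwc : ∀ c : ℕ, (w : ℕ → ℝ) c = ∑ i ∈ range (m+1),
      (ee i * (lam * ((J i : ℝ))⁻¹)) * (if blk i ≤ c ∧ c < blk i + J i then 1 else 0) := by
    intro c
    rw [hw, lp.coeFn_sum, Finset.sum_apply]
    apply Finset.sum_congr rfl
    intro i _
    rw [lp.coeFn_smul, Pi.smul_apply, smul_eq_mul]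
    congr 1
    rw [lp.coeFn_sum]
    exact sum_single_apply (blk i) (J i) c
  -- membership characterisation
  have hchar : ∀ i c, (blk i ≤ c ∧ c < blk i + J i) ↔ c / J i = b / J i := by
    intro i c
    constructor
    · rintro ⟨h1, h2⟩
      apply Nat.div_eq_of_lt_le
      · calc b / J i * J i = blk i := by rw [hblk]; ring
        _ ≤ c := h1
      · calc c < blk i + J i := h2
        _ = (b / J i + 1) * J i := by rw [hblk]; ring
    · intro h
      have h1 := Nat.div_add_mod c (J i)
      have h2 := Nat.mod_lt c (hJpos i)
      constructor
      · calc blk i = J i * (c / J i) := by rw [hblk, h]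
        _ ≤ c := by rw [mul_comm]; exact Nat.div_mul_le_self c (J i)
      · calc c = J i * (c / J i) + c % J i := h1.symm
        _ < J i * (c / J i) + J i := by exact Nat.add_lt_add_left h2 _
        _ = blk i + J i := by rw [hblk, h]
  have hmono : ∀ i i', i ≤ i' → ∀ c, c / J i = b / J i → c / J i' = b / J i' := by
    intro i i' hii' c h
    have hKey : J i * 2^(2^i' - 2^i) = J i' := by
      rw [hJ]
      simp only
      rw [← pow_add, Nat.add_sub_cancel' (Nat.pow_le_pow_right (by norm_num) hii')]
    calc c / J i' = c / (J i * 2^(2^i' - 2^i)) := by rw [hKey]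
    _ = c / J i / 2^(2^i' - 2^i) := (Nat.div_div_eq_div_mul _ _ _).symm
    _ = b / J i / 2^(2^i' - 2^i) := by rw [h]
    _ = b / (J i * 2^(2^i' - 2^i)) := Nat.div_div_eq_div_mul _ _ _
    _ = b / J i' := by rw [hKey]
  -- the per-coordinate lower bound on the new shell
  have hcoord : ∀ i0, i0 < m → ∀ c ∈ D (i0+1) \ D i0,
      lam / 2 * ((J (i0+1) : ℝ))⁻¹ ≤ |(w : ℕ → ℝ) c| := by
    intro i0 hi0 c hc
    rw [Finset.mem_sdiff] at hc
    obtain ⟨hc1, hc2⟩ := hc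
    rw [hD] at hc1 hc2
    simp only [Finset.mem_Ico] at hc1 hc2
    have hcm : ∀ i ∈ range (m+1), ((blk i ≤ c ∧ c < blk i + J i) ↔ i0+1 ≤ i) := by
      intro i hi
      constructor
      · intro h
        by_contra hlt
        push_neg at hlt
        have h1 : c / J i = b / J i := (hchar i c).1 h
        have h2 : c / J i0 = b / J i0 := hmono i i0 (by omega) c h1
        exact hc2 ((hchar i0 c).2 h2)
      · intro h
        apply (hchar i c).2
        exact hmono (i0+1) i h c ((hchar (i0+1) c).1 hc1)
    have hwc2 : (w : ℕ → ℝ) c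
        = ∑ i ∈ Finset.Ico (i0+1) (m+1), (ee i * (lam * ((J i : ℝ))⁻¹)) := by
      rw [hwc c]
      have step1 : ∀ i ∈ range (m+1),
          (ee i * (lam * ((J i : ℝ))⁻¹)) * (if blk i ≤ c ∧ c < blk i + J i then 1 else 0)
          = if i0+1 ≤ i then (ee i * (lam * ((J i : ℝ))⁻¹)) else 0 := by
        intro i hi
        by_cases h : i0+1 ≤ i
        · rw [if_pos h, if_pos ((hcm i hi).2 h), mul_one]
        · rw [if_neg h, if_neg (fun hmem => h ((hcm i hi).1 hmem)), mul_zero]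
      rw [Finset.sum_congr rfl step1, Finset.sum_ite, Finset.sum_const_zero, add_zero]
      apply Finset.sum_congr _ (fun _ _ => rfl)
      ext i
      simp only [Finset.mem_filter, Finset.mem_range, Finset.mem_Ico]
      omega
    rw [hwc2, Finset.sum_eq_sum_Ico_succ_bot (by omega : i0+1 < m+1)]
    set R : ℝ := ∑ i ∈ Finset.Ico (i0+1+1) (m+1), (ee i * (lam * ((J i : ℝ))⁻¹)) with hR
    have hhead : |ee (i0+1) * (lam * ((J (i0+1) : ℝ))⁻¹)| = lam * ((J (i0+1) : ℝ))⁻¹ := by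
      rw [abs_mul, habs, one_mul, abs_of_pos]
      positivity
    have htail : |R| ≤ lam / 2 * ((J (i0+1) : ℝ))⁻¹ := by
      have h1 : |R| ≤ ∑ i ∈ Finset.Ico (i0+2) (m+1), lam * ((J i : ℝ))⁻¹ := by
        rw [hR]
        refine (Finset.abs_sum_le_sum_abs _ _).trans ?_
        apply Finset.sum_le_sum
        intro i _
        rw [abs_mul, habs, one_mul, abs_of_pos (by positivity)]
      have h2 : ∑ i ∈ Finset.Ico (i0+2) (m+1), lam * ((J i : ℝ))⁻¹
          = lam * ∑ i ∈ Finset.Ico (i0+2) (m+1), ((J i : ℝ))⁻¹ := by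
        rw [Finset.mul_sum]
      have h3 : ∑ i ∈ Finset.Ico (i0+2) (m+1), ((J i : ℝ))⁻¹
          ≤ 2 * ((2:ℝ)^(2^(i0+2)))⁻¹ := by
        have h4 : ∑ i ∈ Finset.Ico (i0+2) (m+1), ((J i : ℝ))⁻¹
            = ∑ i ∈ range (m+1-(i0+2)), ((2:ℝ)^(2^((i0+2)+i)))⁻¹ := by
          rw [Finset.sum_Ico_eq_sum_range]
          apply Finset.sum_congr rfl
          intro i _
          rw [hJr]
        rw [h4]
        exact tail_bound _ _
      have h5 : 2 * ((2:ℝ)^(2^(i0+2)))⁻¹ ≤ (1/2) * ((2:ℝ)^(2^(i0+1)))⁻¹ := by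
        set y : ℝ := (2:ℝ)^(2^(i0+1)) with hy
        have hy4 : (4:ℝ) ≤ y := by
          rw [hy]
          calc (4:ℝ) = 2^2 := by norm_num
          _ ≤ 2^(2^(i0+1)) := by
              apply pow_le_pow_right₀ (by norm_num)
              have : 2 ≤ 2^(i0+1) := by
                calc 2 = 2^1 := by norm_num
                _ ≤ 2^(i0+1) := Nat.pow_le_pow_right (by norm_num) (by omega)
              exact this
        have hysq : (2:ℝ)^(2^(i0+2)) = y^2 := by
          rw [hy, ← pow_mul]
          congr 1
        rw [hysq]
        have hypos : (0:ℝ) < y := by linarith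
        rw [sq, mul_inv]
        have hinv : y⁻¹ ≤ 4⁻¹ := inv_anti₀ (by norm_num) hy4
        have hinvpos : (0:ℝ) < y⁻¹ := by positivity
        nlinarith
      calc |R| ≤ lam * ∑ i ∈ Finset.Ico (i0+2) (m+1), ((J i : ℝ))⁻¹ := by
            rw [← h2]; exact h1
      _ ≤ lam * ((1/2) * ((2:ℝ)^(2^(i0+1)))⁻¹) := by
          apply mul_le_mul_of_nonneg_left (h3.trans h5) hlampos.le
      _ = lam / 2 * ((J (i0+1) : ℝ))⁻¹ := by rw [hJr]; ring
    have habs2 : |ee (i0+1) * (lam * ((J (i0+1) : ℝ))⁻¹)|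
        ≤ |ee (i0+1) * (lam * ((J (i0+1) : ℝ))⁻¹) + R| + |R| := by
      calc |ee (i0+1) * (lam * ((J (i0+1) : ℝ))⁻¹)|
          = |(ee (i0+1) * (lam * ((J (i0+1) : ℝ))⁻¹) + R) + (-R)| := by congr 1; ring
      _ ≤ |ee (i0+1) * (lam * ((J (i0+1) : ℝ))⁻¹) + R| + |(-R)| := abs_add_le _ _
      _ = |ee (i0+1) * (lam * ((J (i0+1) : ℝ))⁻¹) + R| + |R| := by rw [abs_neg]
    rw [hhead] at habs2
    have hJinv : (0:ℝ) < ((J (i0+1) : ℝ))⁻¹ := by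
      apply inv_pos.2 (hJrpos _)
    linarith
  -- the shell-sum induction
  have hstep : ∀ i0, i0 < m →
      ∑ c ∈ D i0, |(w : ℕ → ℝ) c| + lam/4 ≤ ∑ c ∈ D (i0+1), |(w : ℕ → ℝ) c| := by
    intro i0 hi0
    have hsub : D i0 ⊆ D (i0+1) := by
      intro c hcmem
      rw [hD] at hcmem ⊢
      simp only [Finset.mem_Ico] at hcmem ⊢
      have h1 : c / J i0 = b / J i0 := (hchar i0 c).1 hcmem
      have h2 := hmono i0 (i0+1) (by omega) c h1
      exact (hchar (i0+1) c).2 h2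
    rw [← Finset.sum_sdiff hsub]
    have hcard : (D (i0+1) \ D i0).card = J (i0+1) - J i0 := by
      rw [Finset.card_sdiff_of_subset hsub, hD]
      simp [Nat.card_Ico]
    have hdiff : ((J (i0+1) - J i0 : ℕ):ℝ) * (lam / 2 * ((J (i0+1) : ℝ))⁻¹)
        ≤ ∑ c ∈ D (i0+1) \ D i0, |(w : ℕ → ℝ) c| := by
      have h1 := Finset.card_nsmul_le_sum (D (i0+1) \ D i0) (fun c => |(w : ℕ → ℝ) c|)
        (lam / 2 * ((J (i0+1) : ℝ))⁻¹) (fun c hcmem => hcoord i0 hi0 c hcmem)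
      rw [hcard, nsmul_eq_mul] at h1
      exact h1
    have h2J : 2 * J i0 ≤ J (i0+1) := by
      rw [hJ]
      simp only
      calc 2 * 2^(2^i0) = 2^(2^i0 + 1) := by rw [pow_succ]; ring
      _ ≤ 2^(2^(i0+1)) := by
          apply Nat.pow_le_pow_right (by norm_num)
          have h3 := Nat.one_le_two_pow (n := i0)
          rw [pow_succ]
          omega
    have hJle : J i0 ≤ J (i0+1) := by omega
    have hlow : lam/4 ≤ ((J (i0+1) - J i0 : ℕ):ℝ) * (lam / 2 * ((J (i0+1) : ℝ))⁻¹) := by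
      have hc1 : ((J (i0+1) - J i0 : ℕ):ℝ) = (J (i0+1):ℝ) - (J i0:ℝ) := by
        rw [Nat.cast_sub hJle]
      have hc2 : (J i0 : ℝ) ≤ (J (i0+1):ℝ) / 2 := by
        have : (2:ℝ) * (J i0:ℝ) ≤ (J (i0+1):ℝ) := by exact_mod_cast h2J
        linarith
      have hpos1 := hJrpos (i0+1)
      have hinv1 : (0:ℝ) < ((J (i0+1) : ℝ))⁻¹ := by positivity
      have hid : ((J (i0+1):ℝ)/2) * (lam / 2 * ((J (i0+1) : ℝ))⁻¹) = lam/4 := by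
        field_simp
        ring
      rw [hc1]
      calc lam/4 = ((J (i0+1):ℝ)/2) * (lam / 2 * ((J (i0+1) : ℝ))⁻¹) := hid.symm
      _ ≤ ((J (i0+1):ℝ) - (J i0:ℝ)) * (lam / 2 * ((J (i0+1) : ℝ))⁻¹) := by
          apply mul_le_mul_of_nonneg_right _ (by positivity)
          linarith
    have hrest : (0:ℝ) ≤ ∑ c ∈ D i0, |(w : ℕ → ℝ) c| :=
      Finset.sum_nonneg (fun c _ => abs_nonneg _)
    linarith [hdiff.trans' hlow]
  have hind : ∀ i0, i0 ≤ m → (i0:ℝ) * (lam/4) ≤ ∑ c ∈ D i0, |(w : ℕ → ℝ) c| := by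
    intro i0
    induction i0 with
    | zero =>
      intro _
      simp only [Nat.cast_zero, zero_mul]
      exact Finset.sum_nonneg (fun c _ => abs_nonneg _)
    | succ i0 ih =>
      intro hi0
      have h1 := ih (by omega)
      have h2 := hstep i0 (by omega)
      push_cast
      linarith
  -- conclude
  have hfin := hind m le_rfl
  have hnorm : ∑ c ∈ D m, |(w : ℕ → ℝ) c| ≤ ‖w‖ := by
    have h1 : ‖w‖ = ∑' c, ‖(w : ℕ → ℝ) c‖ := by
      rw [lp.norm_eq_tsum_rpow (by norm_num : 0 < (1:ENNReal).toReal) w]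
      simp [ENNReal.toReal_one]
    rw [h1]
    have hsummable : Summable (fun c => ‖(w : ℕ → ℝ) c‖) := by
      have h2 := (lp.memℓp w).summable (by norm_num : 0 < (1:ENNReal).toReal)
      simpa [ENNReal.toReal_one] using h2
    have h3 := hsummable.sum_le_tsum (D m) (fun c _ => norm_nonneg ((w : ℕ → ℝ) c))
    refine le_trans (le_of_eq ?_) h3
    apply Finset.sum_congr rfl
    intro c _
    rw [Real.norm_eq_abs]
  calc (m:ℝ) * (lam/4) ≤ ∑ c ∈ D m, |(w : ℕ → ℝ) c| := hfin
  _ ≤ ‖w‖ := hnorm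

lemma lower_bound {m : ℕ} (hm : 1 ≤ m) {x : ℝ} (hx0 : 0 ≤ x) (hx1 : x < 1) :
    (m:ℝ) * ((Real.sqrt (m+1))⁻¹ / 4) ≤ rademacherMaximal₁ (u (2^m)) x := by
  classical
  have hinj : Function.Injective (fun i : ℕ => ((2^i : ℕ) : ℤ) - ((2^m : ℕ) : ℤ)) := by
    intro a b h
    simp only at h
    have h1 : ((2^a : ℕ):ℤ) = ((2^b : ℕ):ℤ) := by omega
    have h2 : (2:ℕ)^a = 2^b := by exact_mod_cast h1
    exact Nat.pow_right_injective (by norm_num) h2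
  set s₀ : Finset ℤ :=
    (range (m+1)).image (fun i => ((2^i : ℕ) : ℤ) - ((2^m : ℕ) : ℤ)) with hs₀
  have hcard : s₀.card = m+1 := by
    rw [hs₀, Finset.card_image_of_injective _ hinj, Finset.card_range]
  have hconstraint : ∑ k ∈ s₀, ((fun _ : ℤ => (Real.sqrt (m+1))⁻¹) k)^2 ≤ 1 := by
    rw [Finset.sum_const, hcard, nsmul_eq_mul]
    have h1 : ((Real.sqrt (m+1))⁻¹)^2 = (((m:ℝ))+1)⁻¹ := by
      rw [inv_pow, Real.sq_sqrt (by positivity)]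
    rw [h1]
    have h2 : ((m:ℝ)) + 1 ≠ 0 := by positivity
    apply le_of_eq
    push_cast
    field_simp
  set P₀ : {p : Finset ℤ × (ℤ → ℝ) // ∑ k ∈ p.1, (p.2 k)^2 ≤ 1} :=
    ⟨(s₀, fun _ => (Real.sqrt (m+1))⁻¹), hconstraint⟩ with hP₀
  rw [rademacherMaximal₁]
  refine le_trans ?_ (le_ciSup (rmf_bddAbove ⟨hx0, hx1⟩) P₀)
  apply radE_ge
  intro σ
  set eσ : ℤ → ℝ := fun k =>
    if h : k ∈ s₀ then (if σ ⟨k, h⟩ then (1:ℝ) else -1) else 1 with heσ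
  have heσval : ∀ k, eσ k = 1 ∨ eσ k = -1 := by
    intro k
    rw [heσ]
    simp only
    split
    · split
      · left; rfl
      · right; rfl
    · left; rfl
  have hterm : ∀ i : {k // k ∈ s₀},
      (if σ i then (P₀.1.2 i.1) • dyadicAvg₁ (u (2^m)) i.1 x
        else -((P₀.1.2 i.1) • dyadicAvg₁ (u (2^m)) i.1 x))
      = eσ i.1 • ((Real.sqrt (m+1))⁻¹ • dyadicAvg₁ (u (2^m)) i.1 x) := by
    rintro ⟨k, hk⟩
    simp only [heσ, hP₀]
    rw [dif_pos hk]
    cases σ ⟨k, hk⟩ <;> simp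
  have hsum : ∑ i : {k // k ∈ s₀},
      (if σ i then (fun k => P₀.1.2 k • dyadicAvg₁ (u (2^m)) k x) i.1
        else -((fun k => P₀.1.2 k • dyadicAvg₁ (u (2^m)) k x) i.1))
      = ∑ i ∈ range (m+1), eσ (((2^i : ℕ) : ℤ) - ((2^m : ℕ) : ℤ)) •
          ((Real.sqrt (m+1))⁻¹ •
            dyadicAvg₁ (u (2^m)) (((2^i : ℕ) : ℤ) - ((2^m : ℕ) : ℤ)) x) := by
    rw [Finset.sum_congr rfl (fun i _ => hterm i)]
    rw [Finset.univ_eq_attach,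
      Finset.sum_attach s₀ (fun k => eσ k • ((Real.sqrt (m+1))⁻¹ • dyadicAvg₁ (u (2^m)) k x)),
      hs₀, Finset.sum_image (fun a _ b _ h => hinj h)]
  rw [hsum]
  exact key hm ⟨hx0, hx1⟩ eσ heσval

lemma log_le {m : ℕ} (hm : 1 ≤ m) :
    (1/16 : ℝ) * Real.log m ≤ (m:ℝ) * ((Real.sqrt (m+1))⁻¹ / 4) := by
  have hm1 : (1:ℝ) ≤ m := by exact_mod_cast hm
  set a : ℝ := Real.sqrt m with ha
  have ha1 : 1 ≤ a := by
    rw [ha]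
    rw [show (1:ℝ) = Real.sqrt 1 from (Real.sqrt_one).symm]
    exact Real.sqrt_le_sqrt hm1
  have hasq : a^2 = m := Real.sq_sqrt (by positivity)
  have hlog : Real.log m ≤ 2*a := by
    rw [← hasq, Real.log_pow]
    push_cast
    have h1 := Real.log_le_sub_one_of_pos (show (0:ℝ) < a by linarith)
    linarith
  set t : ℝ := Real.sqrt ((m:ℝ)+1) with ht
  have htpos : 0 < t := Real.sqrt_pos.2 (by positivity)
  have hta : t ≤ 2*a := by
    rw [ht, ha]
    have h2 : (2:ℝ) * Real.sqrt m = Real.sqrt (4*m) := by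
      rw [show (4:ℝ)*m = (2*Real.sqrt m)^2 from by
        rw [mul_pow, Real.sq_sqrt (by positivity : (0:ℝ) ≤ (m:ℝ))]; norm_num]
      rw [Real.sqrt_sq (by positivity)]
    rw [h2]
    exact Real.sqrt_le_sqrt (by linarith)
  have hinv : t * t⁻¹ = 1 := mul_inv_cancel₀ htpos.ne'
  have hinvpos : 0 < t⁻¹ := by positivity
  have h5 : a ≤ 2*(a*a)*t⁻¹ := by
    have h3 : a = (a * t) * t⁻¹ := by field_simp
    have h4 : a * t ≤ 2*(a*a) := by nlinarith
    calc a = (a * t) * t⁻¹ := h3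
    _ ≤ (2*(a*a)) * t⁻¹ := mul_le_mul_of_nonneg_right h4 hinvpos.le
    _ = 2*(a*a)*t⁻¹ := by ring
  have h6 : (m:ℝ) * (t⁻¹/4) = (a*a)*t⁻¹/4 := by
    rw [← hasq]; ring
  rw [h6]
  linarith

lemma eLpNorm_u {p : ℝ} (hp : 1 ≤ p) :
    eLpNorm (u n) (ENNReal.ofReal p) volume = 1 := by
  have hppos : 0 < p := by linarith
  have hq0 : ENNReal.ofReal p ≠ 0 := by
    simp only [ne_eq, ENNReal.ofReal_eq_zero, not_le]
    linarith
  have hqt : ENNReal.ofReal p ≠ ⊤ := ENNReal.ofReal_ne_top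
  rw [eLpNorm_eq_lintegral_rpow_enorm_toReal hq0 hqt, ENNReal.toReal_ofReal hppos.le]
  simp only [enorm_eq_nnnorm]
  have hpt : ∀ x : ℝ, ((‖u n x‖₊ : ℝ≥0∞)) ^ p
      = (Set.Ico (0:ℝ) 1).indicator (fun _ => (1:ℝ≥0∞)) x := by
    intro x
    by_cases hx : x ∈ Set.Ico (0:ℝ) 1
    · rw [Set.indicator_of_mem hx]
      have h0 : ‖u n x‖₊ = (1:NNReal) := by
        ext
        rw [coe_nnnorm, u_norm_mem hx, NNReal.coe_one]
      rw [h0, ENNReal.coe_one, ENNReal.one_rpow]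
    · rw [Set.indicator_of_notMem hx]
      have h1 : u n x = 0 := by
        rw [u, if_neg (by simpa [Set.mem_Ico] using hx)]
      rw [h1]
      simp only [nnnorm_zero, ENNReal.coe_zero]
      exact ENNReal.zero_rpow_of_pos hppos
  rw [lintegral_congr hpt, lintegral_indicator measurableSet_Ico, setLIntegral_const]
  rw [Real.volume_Ico]
  simp

lemma eLpNorm_MR_lower {p B : ℝ} (hp : 1 ≤ p) (hB : 0 ≤ B)
    (hlow : ∀ x ∈ Set.Ico (0:ℝ) 1, B ≤ rademacherMaximal₁ (u n) x) :
    ENNReal.ofReal B ≤ eLpNorm (rademacherMaximal₁ (u n)) (ENNReal.ofReal p) volume := by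
  have hppos : 0 < p := by linarith
  have hq0 : ENNReal.ofReal p ≠ 0 := by
    simp only [ne_eq, ENNReal.ofReal_eq_zero, not_le]
    linarith
  have hqt : ENNReal.ofReal p ≠ ⊤ := ENNReal.ofReal_ne_top
  rw [eLpNorm_eq_lintegral_rpow_enorm_toReal hq0 hqt, ENNReal.toReal_ofReal hppos.le]
  simp only [enorm_eq_nnnorm]
  have hpoint : ∀ x : ℝ, (Set.Ico (0:ℝ) 1).indicator (fun _ => (ENNReal.ofReal B)^p) x
      ≤ (‖rademacherMaximal₁ (u n) x‖₊ : ℝ≥0∞)^p := by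
    intro x
    by_cases hx : x ∈ Set.Ico (0:ℝ) 1
    · rw [Set.indicator_of_mem hx]
      apply ENNReal.rpow_le_rpow _ hppos.le
      have h1 := hlow x hx
      have h2 : (‖rademacherMaximal₁ (u n) x‖₊ : ℝ≥0∞)
          = ENNReal.ofReal (rademacherMaximal₁ (u n) x) :=
        Real.enorm_eq_ofReal (le_trans hB h1)
      rw [h2]
      exact ENNReal.ofReal_le_ofReal h1
    · rw [Set.indicator_of_notMem hx]
      exact zero_le
  have h3 := lintegral_mono (μ := volume) hpoint
  rw [lintegral_indicator measurableSet_Ico, setLIntegral_const, Real.volume_Ico] at h3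
  simp only [sub_zero, ENNReal.ofReal_one, mul_one] at h3
  have h4 := ENNReal.rpow_le_rpow h3 (show (0:ℝ) ≤ 1/p by positivity)
  rw [← ENNReal.rpow_mul, mul_one_div_cancel hppos.ne', ENNReal.rpow_one] at h4
  exact h4

end NotRMF

/-- ℓ¹ does not have the RMF property: for every `n = 2^m` there is a norm-one-valued step
function `u` (equal to `e_k` on `[(k)2^{−n}, (k+1)2^{−n})`) with `M_R u ≳ log m` on `[0,1)`;
hence `M_R` is unbounded from `L^p(ℝ;ℓ¹)` to `L^p(ℝ)` for every `p`. -/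
theorem ellOne_not_RMF :
    (∃ c : ℝ, 0 < c ∧ ∀ m : ℕ, 1 ≤ m → ∃ u : ℝ → EllOne,
      (∀ k : ℕ, k < 2 ^ 2 ^ m →
        ∀ x ∈ Set.Ico ((k : ℝ) * (2 : ℝ) ^ (-(2 ^ m : ℕ) : ℤ))
            (((k : ℝ) + 1) * (2 : ℝ) ^ (-(2 ^ m : ℕ) : ℤ)),
          u x = lp.single 1 k (1 : ℝ)) ∧
      (∀ x ∈ Set.Ico (0 : ℝ) 1, ‖u x‖ = 1) ∧
      (∀ x ∈ Set.Ico (0 : ℝ) 1, c * Real.log m ≤ rademacherMaximal₁ u x)) ∧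
    (∀ p : ℝ, 1 ≤ p → ¬ ∃ C : ℝ, ∀ u : ℝ → EllOne,
      eLpNorm (rademacherMaximal₁ u) (ENNReal.ofReal p) volume
        ≤ ENNReal.ofReal C * eLpNorm u (ENNReal.ofReal p) volume) := by
  classical
  have hpow : ∀ m : ℕ, (2:ℝ) ^ (-(2^m : ℕ) : ℤ) = ((2:ℝ)^(2^m : ℕ))⁻¹ := by
    intro m
    rw [zpow_neg, zpow_natCast]
  constructor
  · refine ⟨1/16, by norm_num, ?_⟩
    intro m hm
    refine ⟨NotRMF.u (2^m), ?_, ?_, ?_⟩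
    · intro k hk x hxmem
      rw [hpow m] at hxmem
      exact NotRMF.u_cell hk hxmem
    · intro x hx
      exact NotRMF.u_norm_mem hx
    · intro x hx
      have h1 := NotRMF.lower_bound hm hx.1 hx.2
      have h2 := NotRMF.log_le hm
      linarith
  · rintro p hp ⟨C, hC⟩
    set y : ℝ := Real.exp ((max C 0) * 16) with hy
    set m : ℕ := max 1 (⌈y⌉₊ + 1) with hm
    have hm1 : 1 ≤ m := le_max_left _ _
    have hym : y < m := by
      have h1 : y ≤ (⌈y⌉₊ : ℝ) := Nat.le_ceil y
      have h2 : (⌈y⌉₊ + 1 : ℕ) ≤ m := le_max_right _ _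
      have h3 : ((⌈y⌉₊ + 1 : ℕ) : ℝ) ≤ (m:ℝ) := by exact_mod_cast h2
      push_cast at h3
      linarith
    have hmpos : (0:ℝ) < m := by
      have h4 : (1:ℝ) ≤ (m:ℝ) := by exact_mod_cast hm1
      linarith
    have hlog : (max C 0) * 16 < Real.log m := (Real.lt_log_iff_exp_lt hmpos).2 hym
    have hBpos : (0:ℝ) ≤ (1/16 : ℝ) * Real.log m := by
      have h5 := Real.log_nonneg (show (1:ℝ) ≤ (m:ℝ) by exact_mod_cast hm1)
      positivity
    have hBC : max C 0 < (1/16 : ℝ) * Real.log m := by linarith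
    have hlower : ∀ x ∈ Set.Ico (0:ℝ) 1,
        (1/16 : ℝ) * Real.log m ≤ rademacherMaximal₁ (NotRMF.u (2^m)) x := by
      intro x hx
      have h1 := NotRMF.lower_bound hm1 hx.1 hx.2
      have h2 := NotRMF.log_le hm1
      linarith
    have h1 := NotRMF.eLpNorm_MR_lower hp hBpos hlower
    have h2 := hC (NotRMF.u (2^m))
    rw [NotRMF.eLpNorm_u hp, mul_one] at h2
    have h3 : ENNReal.ofReal ((1/16 : ℝ) * Real.log m) ≤ ENNReal.ofReal (max C 0) :=
      le_trans (le_trans h1 h2) (ENNReal.ofReal_le_ofReal (le_max_left C 0))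
    have h4 := (ENNReal.ofReal_le_ofReal_iff (le_max_right C 0)).1 h3
    linarith
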